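/- arXiv:2012.04688 — 2 statements merged into one kernel-verified Lean document; each statement's English description precedes it below -/
import Mathlib

section
/- Simplified S-lemma: Let A, D ∈ ℝ^{n×n} be symmetric, b, e ∈ ℝⁿ, c, f ∈ ℝ. Suppose there exists z₀ ∈ ℝⁿ with z₀ᵀAz₀ + 2bᵀz₀ + c > 0, and there exist an invertible matrix S ∈ ℝ^{n×n} and vectors α, δ ∈ ℝⁿ with SᵀAS = diag(α₁, …, αₙ) and SᵀDS = diag(δ₁, …, δₙ). Set ε = Sᵀe and β = Sᵀb. Then the implication (for all z ∈ ℝⁿ: zᵀAz + 2bᵀz + c ≥ 0 implies zᵀDz + 2eᵀz + f ≥ 0) holds if and only if there exist λ ≥ 0 and t ∈ ℝⁿ such that f − λc ≥ Σᵢ tᵢ and (εᵢ − λβᵢ, tᵢ, δᵢ − λαᵢ) ∈ Q for every i ∈ {1, …, n}. -/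
/-!
Substituting `z = S w` turns both quadratic functions into separable ones,
`∑ᵢ (aᵢ wᵢ² + 2 uᵢ wᵢ) + γ`, and such a function is nonnegative everywhere exactly when
`γ ≥ ∑ᵢ tᵢ` for some `tᵢ` with `(uᵢ, tᵢ, aᵢ) ∈ Q` (take `tᵢ = uᵢ² / aᵢ`, the negative of the minimum
of the `i`-th summand). So it suffices to find the multiplier `λ ≥ 0` with `h - λ g ≥ 0`: this is the
S-lemma.

For quadratic forms with `q₁ v₀ > 0` and `q₁ ≥ 0 → q₂ ≥ 0`, the multiplier is
`λ = inf {q₂ w / q₁ w | q₁ w > 0}`. The only nontrivial inequality, `λ q₁ v ≤ q₂ v` when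
`q₁ v < 0`, is a statement about the plane spanned by `v` and `w`: the form
`q₁ w • q₂ - q₂ w • q₁` is affine along the line `v + s w` and nonnegative at the two roots of
`q₁` on this line, which lie on either side of `v`. Quadratic functions are reduced to forms by
homogenization; the Slater point handles the points at infinity.
-/

open Matrix

/-- The set `Q = {(x, y, z) ∈ ℝ³ : ‖(2x, y − z)‖₂ ≤ y + z}`. -/
def socQ : Set (ℝ × ℝ × ℝ) :=
  {p | Real.sqrt (4 * p.1 ^ 2 + (p.2.1 - p.2.2) ^ 2) ≤ p.2.1 + p.2.2}

theorem exists_roots_of_pos_of_neg {a b c : ℝ} (ha : 0 < a) (hc : c < 0) :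
    ∃ s₁ s₂ : ℝ, s₁ < 0 ∧ 0 < s₂ ∧ c + b * s₁ + a * s₁ ^ 2 = 0 ∧ c + b * s₂ + a * s₂ ^ 2 = 0 := by
  set d := Real.sqrt (b ^ 2 - 4 * a * c)
  have hd : d ^ 2 = b ^ 2 - 4 * a * c := Real.sq_sqrt (by nlinarith [sq_nonneg b])
  have hbd : |b| < d := (Real.lt_sqrt (abs_nonneg b)).2 (by nlinarith [sq_abs b])
  refine ⟨(-b - d) / (2 * a), (-b + d) / (2 * a), ?_, ?_, ?_, ?_⟩
  · exact div_neg_of_neg_of_pos (by linarith [neg_abs_le b]) (by positivity)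
  · exact div_pos (by linarith [le_abs_self b]) (by positivity)
  · field_simp; linear_combination hd
  · field_simp; linear_combination hd

theorem nonneg_of_forall_mul_nonneg_imp_quadratic_nonneg {a b c p : ℝ}
    (h : ∀ t, 0 ≤ p * t → 0 ≤ c + b * t + a * t ^ 2) : 0 ≤ a := by
  by_contra! ha
  set T := (|b| + |c|) / -a + 1
  have hX : -a * ((|b| + |c|) / -a) = |b| + |c| := mul_div_cancel₀ _ (by linarith)
  have hT : a * T = a - (|b| + |c|) := by linear_combination -hX
  have hT1 : 1 ≤ T := le_add_of_nonneg_left (div_nonneg (by positivity) (by linarith))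
  obtain ⟨t, hpt, ht⟩ : ∃ t, 0 ≤ p * t ∧ |t| = T := by
    rcases le_total 0 p with hp | hp
    · exact ⟨T, by nlinarith, abs_of_pos (by linarith)⟩
    · exact ⟨-T, by nlinarith, by rw [abs_neg, abs_of_pos (by linarith)]⟩
  have hbt : b * t ≤ |b| * T := ht ▸ abs_mul b t ▸ le_abs_self _
  have hc : c ≤ |c| * T := (le_abs_self c).trans (le_mul_of_one_le_right (abs_nonneg c) hT1)
  have hat : a * t ^ 2 = (a - (|b| + |c|)) * T := by rw [← sq_abs, ht, pow_two, ← mul_assoc, hT]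
  linarith [h t hpt, abs_nonneg b, abs_nonneg c]

theorem nonneg_and_sq_le_of_forall_quadratic_nonneg {a u γ : ℝ}
    (h : ∀ x, 0 ≤ a * x ^ 2 + 2 * u * x + γ) : 0 ≤ a ∧ u ^ 2 ≤ a * γ := by
  have hdisc := discrim_le_zero (a := a) (b := 2 * u) (c := γ) fun x => by nlinarith [h x]
  have h0 := h 0
  have h1 := h 1
  have h2 := h (-1)
  unfold discrim at hdisc
  constructor <;> nlinarith

theorem quadratic_at_vertex {u a : ℝ} (hu : a = 0 → u = 0) :
    a * (-u / a) ^ 2 + 2 * u * (-u / a) = -(u ^ 2 / a) := by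
  rcases eq_or_ne a 0 with rfl | ha
  · simp [hu rfl]
  · field_simp
    ring

open QuadraticMap

namespace QuadraticForm

variable {V : Type*} [AddCommGroup V] [Module ℝ V]

theorem map_add_smul (q : QuadraticForm ℝ V) (x y : V) (t : ℝ) :
    q (x + t • y) = q x + polar q x y * t + q y * t ^ 2 := by
  rw [QuadraticMap.map_add q, QuadraticMap.map_smul, polar_smul_right, smul_eq_mul, smul_eq_mul]
  ring

theorem cross_mul_le_of_neg_of_pos {q₁ q₂ : QuadraticForm ℝ V} (h : ∀ v, 0 ≤ q₁ v → 0 ≤ q₂ v)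
    {v w : V} (hv : q₁ v < 0) (hw : 0 < q₁ w) : q₂ w * q₁ v ≤ q₂ v * q₁ w := by
  obtain ⟨s₁, s₂, hs₁, hs₂, hr₁, hr₂⟩ := exists_roots_of_pos_of_neg (b := polar q₁ v w) hw hv
  have hq₂ : ∀ s, q₁ v + polar q₁ v w * s + q₁ w * s ^ 2 = 0 →
      0 ≤ q₂ v + polar q₂ v w * s + q₂ w * s ^ 2 := fun s hs => by
    rw [← map_add_smul] at hs ⊢
    exact h _ hs.ge
  have e₁ : 0 ≤ q₁ w * (q₂ v + polar q₂ v w * s₁ + q₂ w * s₁ ^ 2)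
      - q₂ w * (q₁ v + polar q₁ v w * s₁ + q₁ w * s₁ ^ 2) := by
    rw [hr₁, mul_zero, sub_zero]
    exact mul_nonneg hw.le (hq₂ s₁ hr₁)
  have e₂ : 0 ≤ q₁ w * (q₂ v + polar q₂ v w * s₂ + q₂ w * s₂ ^ 2)
      - q₂ w * (q₁ v + polar q₁ v w * s₂ + q₁ w * s₂ ^ 2) := by
    rw [hr₂, mul_zero, sub_zero]
    exact mul_nonneg hw.le (hq₂ s₂ hr₂)
  nlinarith [mul_nonneg hs₂.le e₁, mul_nonneg (neg_nonneg.2 hs₁.le) e₂]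

theorem homogeneous_s_lemma {q₁ q₂ : QuadraticForm ℝ V} (hslater : ∃ v₀, 0 < q₁ v₀)
    (h : ∀ v, 0 ≤ q₁ v → 0 ≤ q₂ v) : ∃ μ : ℝ, 0 ≤ μ ∧ ∀ v, μ * q₁ v ≤ q₂ v := by
  set ratios := (fun w => q₂ w / q₁ w) '' {w | 0 < q₁ w}
  have hne : ratios.Nonempty := Set.Nonempty.image _ hslater
  have hnonneg : ∀ r ∈ ratios, 0 ≤ r := by
    rintro _ ⟨w, hw, rfl⟩
    exact div_nonneg (h w hw.le) hw.le
  refine ⟨sInf ratios, le_csInf hne hnonneg, fun v => ?_⟩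
  rcases lt_trichotomy (q₁ v) 0 with hv | hv | hv
  · refine (div_le_iff_of_neg hv).1 (le_csInf hne ?_)
    rintro _ ⟨w, hw, rfl⟩
    rw [div_le_iff_of_neg hv, div_mul_eq_mul_div, div_le_iff₀ hw]
    exact cross_mul_le_of_neg_of_pos h hv hw
  · simpa [hv] using h v hv.ge
  · have := csInf_le ⟨0, hnonneg⟩ ⟨v, hv, rfl⟩
    rwa [le_div_iff₀ hv] at this

noncomputable def homogenization (q : QuadraticForm ℝ V) (ℓ : V →ₗ[ℝ] ℝ) (c : ℝ) :
    QuadraticForm ℝ (V × ℝ) :=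
  q.comp (LinearMap.fst ℝ V ℝ)
    + (2 : ℝ) • linMulLin (ℓ ∘ₗ LinearMap.fst ℝ V ℝ) (LinearMap.snd ℝ V ℝ)
    + c • sq.comp (LinearMap.snd ℝ V ℝ)

variable {q q₁ q₂ : QuadraticForm ℝ V} {ℓ ℓ₁ ℓ₂ : V →ₗ[ℝ] ℝ} {c c₁ c₂ : ℝ}

@[simp]
theorem homogenization_apply (v : V) (τ : ℝ) :
    homogenization q ℓ c (v, τ) = q v + 2 * (ℓ v * τ) + c * (τ * τ) :=
  rfl

theorem homogenization_apply_of_ne_zero {τ : ℝ} (hτ : τ ≠ 0) (v : V) :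
    homogenization q ℓ c (v, τ) = τ ^ 2 * (q (τ⁻¹ • v) + 2 * ℓ (τ⁻¹ • v) + c) := by
  rw [homogenization_apply, QuadraticMap.map_smul, map_smul, smul_eq_mul, smul_eq_mul]
  field_simp

theorem homogenization_nonneg_imp_nonneg (hslater : ∃ v₀, 0 < q₁ v₀ + 2 * ℓ₁ v₀ + c₁)
    (h : ∀ v, 0 ≤ q₁ v + 2 * ℓ₁ v + c₁ → 0 ≤ q₂ v + 2 * ℓ₂ v + c₂) (x : V × ℝ)
    (hx : 0 ≤ homogenization q₁ ℓ₁ c₁ x) : 0 ≤ homogenization q₂ ℓ₂ c₂ x := by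
  obtain ⟨v, τ⟩ := x
  rcases eq_or_ne τ 0 with rfl | hτ
  · -- Move from the Slater point `(v₀, 1)` in the direction `(v, 0)`, on the side where the
    -- first form grows: the second form stays nonnegative there, so its leading term is too.
    obtain ⟨v₀, hv₀⟩ := hslater
    have hline : ∀ (q : QuadraticForm ℝ V) (ℓ : V →ₗ[ℝ] ℝ) (c t : ℝ),
        homogenization q ℓ c ((v₀, 1) + t • (v, 0)) =
          q (v₀ + t • v) + 2 * ℓ (v₀ + t • v) + c := by
      intro q ℓ c t
      simp
    have hx₀ : 0 < homogenization q₁ ℓ₁ c₁ (v₀, 1) := by simpa using hv₀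
    refine nonneg_of_forall_mul_nonneg_imp_quadratic_nonneg
      (p := polar (homogenization q₁ ℓ₁ c₁) (v₀, 1) (v, 0))
      (b := polar (homogenization q₂ ℓ₂ c₂) (v₀, 1) (v, 0))
      (c := homogenization q₂ ℓ₂ c₂ (v₀, 1)) fun t ht => ?_
    rw [← map_add_smul, hline]
    refine h _ ?_
    rw [← hline, map_add_smul]
    nlinarith [mul_nonneg (sq_nonneg t) hx]
  · rw [homogenization_apply_of_ne_zero hτ] at hx ⊢
    exact mul_nonneg (sq_nonneg τ) (h _ (nonneg_of_mul_nonneg_right hx (by positivity)))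

theorem s_lemma (hslater : ∃ v₀, 0 < q₁ v₀ + 2 * ℓ₁ v₀ + c₁)
    (h : ∀ v, 0 ≤ q₁ v + 2 * ℓ₁ v + c₁ → 0 ≤ q₂ v + 2 * ℓ₂ v + c₂) :
    ∃ μ : ℝ, 0 ≤ μ ∧ ∀ v, μ * (q₁ v + 2 * ℓ₁ v + c₁) ≤ q₂ v + 2 * ℓ₂ v + c₂ := by
  obtain ⟨v₀, hv₀⟩ := hslater
  obtain ⟨μ, hμ, hle⟩ := homogeneous_s_lemma ⟨(v₀, 1), by simpa using hv₀⟩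
    (homogenization_nonneg_imp_nonneg ⟨v₀, hv₀⟩ h)
  exact ⟨μ, hμ, fun v => by simpa using hle (v, 1)⟩

end QuadraticForm

theorem mem_socQ_iff {x y z : ℝ} : (x, y, z) ∈ socQ ↔ 0 ≤ y ∧ 0 ≤ z ∧ x ^ 2 ≤ y * z := by
  simp only [socQ, Set.mem_ofPred_eq, Real.sqrt_le_iff]
  constructor
  · rintro ⟨hsum, hsq⟩
    refine ⟨?_, ?_, ?_⟩ <;> nlinarith [sq_nonneg x]
  · rintro ⟨hy, hz, hx⟩
    constructor <;> nlinarith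

theorem quadratic_nonneg_of_mem_socQ {u t a : ℝ} (h : (u, t, a) ∈ socQ) (x : ℝ) :
    0 ≤ a * x ^ 2 + 2 * u * x + t := by
  obtain ⟨ht, ha, hu⟩ := mem_socQ_iff.1 h
  rcases ha.eq_or_lt with rfl | ha
  · have : u = 0 := by nlinarith
    simp [this, ht]
  · nlinarith [sq_nonneg (a * x + u)]

theorem mem_socQ_sq_div {u a : ℝ} (ha : 0 ≤ a) (hu : a = 0 → u = 0) :
    (u, u ^ 2 / a, a) ∈ socQ := by
  refine mem_socQ_iff.2 ⟨by positivity, ha, ?_⟩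
  rcases eq_or_ne a 0 with rfl | ha'
  · simp [hu rfl]
  · rw [div_mul_cancel₀ _ ha']

theorem forall_sum_quadratic_nonneg_iff {ι : Type*} [Fintype ι] (a u : ι → ℝ) (γ : ℝ) :
    (∀ w : ι → ℝ, 0 ≤ ∑ i, (a i * w i ^ 2 + 2 * u i * w i) + γ) ↔
      ∃ t : ι → ℝ, ∑ i, t i ≤ γ ∧ ∀ i, (u i, t i, a i) ∈ socQ := by
  classical
  constructor
  · intro h
    have hcoord : ∀ i, 0 ≤ a i ∧ u i ^ 2 ≤ a i * γ := fun i =>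
      nonneg_and_sq_le_of_forall_quadratic_nonneg fun x => by
        have := h (Pi.single i x)
        rwa [Fintype.sum_eq_single i fun j hj => by simp [hj], Pi.single_eq_same] at this
    have hdeg : ∀ i, a i = 0 → u i = 0 := fun i hi => by
      have := (hcoord i).2
      rw [hi, zero_mul] at this
      exact pow_eq_zero_iff two_ne_zero |>.1 (le_antisymm this (sq_nonneg _))
    -- Where `a i = 0` also `u i = 0`, so the junk values `u i ^ 2 / 0 = 0` and `-u i / 0 = 0`
    -- are still the minimum and the minimizer of the `i`-th summand.
    refine ⟨fun i => u i ^ 2 / a i, ?_, fun i => mem_socQ_sq_div (hcoord i).1 (hdeg i)⟩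
    have := h fun i => -u i / a i
    simp only [quadratic_at_vertex (hdeg _), Finset.sum_neg_distrib] at this
    linarith
  · rintro ⟨t, ht, hQ⟩ w
    have := Finset.sum_nonneg fun i (_ : i ∈ Finset.univ) =>
      quadratic_nonneg_of_mem_socQ (hQ i) (w i)
    rw [Finset.sum_add_distrib] at this
    linarith

theorem Matrix.toQuadraticForm'_apply {R n : Type*} [CommRing R] [Fintype n] [DecidableEq n]
    (M : Matrix n n R) (x : n → R) : M.toQuadraticForm' x = x ⬝ᵥ M *ᵥ x := by
  simp [toQuadraticForm', toLinearMap₂'_apply']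

theorem Matrix.dotProduct_mulVec_mulVec_of_transpose_mul_mul_eq_diagonal {n : Type*} [Fintype n]
    [DecidableEq n] {S M : Matrix n n ℝ} {μ : n → ℝ} (h : Sᵀ * M * S = diagonal μ) (w : n → ℝ) :
    S *ᵥ w ⬝ᵥ M *ᵥ (S *ᵥ w) = ∑ i, μ i * w i ^ 2 := by
  rw [mulVec_mulVec, dotProduct_mulVec, ← vecMul_transpose, vecMul_vecMul, ← dotProduct_mulVec,
    ← Matrix.mul_assoc, h]
  simp [dotProduct, mulVec_diagonal, pow_two, mul_left_comm]

theorem simplified_S_lemma_general {n : ℕ}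
    (A D : Matrix (Fin n) (Fin n) ℝ)
    (b e : Fin n → ℝ) (c f : ℝ)
    (hslater : ∃ z₀ : Fin n → ℝ, 0 < z₀ ⬝ᵥ A.mulVec z₀ + 2 * (b ⬝ᵥ z₀) + c)
    (S : Matrix (Fin n) (Fin n) ℝ) (hS : IsUnit S)
    (α δ : Fin n → ℝ)
    (hSA : Sᵀ * A * S = Matrix.diagonal α)
    (hSD : Sᵀ * D * S = Matrix.diagonal δ) :
    (∀ z : Fin n → ℝ, 0 ≤ z ⬝ᵥ A.mulVec z + 2 * (b ⬝ᵥ z) + c →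
        0 ≤ z ⬝ᵥ D.mulVec z + 2 * (e ⬝ᵥ z) + f) ↔
      ∃ (lam : ℝ) (t : Fin n → ℝ), 0 ≤ lam ∧ (∑ i, t i) ≤ f - lam * c ∧
        ∀ i : Fin n,
          ((Sᵀ.mulVec e) i - lam * (Sᵀ.mulVec b) i, t i, δ i - lam * α i) ∈ socQ := by
  have hsurj : ∀ z, S *ᵥ (S⁻¹ *ᵥ z) = z := fun z => by
    rw [mulVec_mulVec, mul_nonsing_inv _ ((isUnit_iff_isUnit_det S).1 hS), one_mulVec]
  have hdiag : ∀ (μ : ℝ) (w : Fin n → ℝ),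
      (S *ᵥ w ⬝ᵥ D *ᵥ (S *ᵥ w) + 2 * (e ⬝ᵥ S *ᵥ w) + f)
        - μ * (S *ᵥ w ⬝ᵥ A *ᵥ (S *ᵥ w) + 2 * (b ⬝ᵥ S *ᵥ w) + c)
      = ∑ i, ((δ i - μ * α i) * w i ^ 2 + 2 * ((Sᵀ *ᵥ e) i - μ * (Sᵀ *ᵥ b) i) * w i)
        + (f - μ * c) := fun μ w => by
    rw [dotProduct_mulVec_mulVec_of_transpose_mul_mul_eq_diagonal hSA,
      dotProduct_mulVec_mulVec_of_transpose_mul_mul_eq_diagonal hSD, dotProduct_mulVec e,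
      dotProduct_mulVec b, ← mulVec_transpose, ← mulVec_transpose]
    simp only [dotProduct, mul_add, mul_sub, sub_mul, Finset.mul_sum, Finset.sum_add_distrib,
      Finset.sum_sub_distrib, mul_assoc, mul_left_comm]
    ring
  constructor
  · intro himp
    obtain ⟨μ, hμ, hle⟩ := QuadraticForm.s_lemma (q₁ := A.toQuadraticForm')
      (ℓ₁ := dotProductBilin ℝ ℝ b) (q₂ := D.toQuadraticForm') (ℓ₂ := dotProductBilin ℝ ℝ e)
      (by simpa [toQuadraticForm'_apply] using hslater)
      (by simpa [toQuadraticForm'_apply] using himp)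
    obtain ⟨t, ht, hQ⟩ := (forall_sum_quadratic_nonneg_iff _ _ _).1 fun w => by
      have := hle (S *ᵥ w)
      simp only [toQuadraticForm'_apply, dotProductBilin_apply_apply] at this
      rw [← hdiag μ]
      linarith
    exact ⟨μ, t, hμ, ht, hQ⟩
  · rintro ⟨μ, t, hμ, ht, hQ⟩ z hz
    have := (forall_sum_quadratic_nonneg_iff _ _ _).2 ⟨t, ht, hQ⟩ (S⁻¹ *ᵥ z)
    rw [← hdiag, hsurj] at this
    nlinarith [mul_nonneg hμ hz]

theorem simplified_S_lemma {n : ℕ}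
    (A D : Matrix (Fin n) (Fin n) ℝ) (hA : A.IsSymm) (hD : D.IsSymm)
    (b e : Fin n → ℝ) (c f : ℝ)
    (hslater : ∃ z₀ : Fin n → ℝ, 0 < z₀ ⬝ᵥ A.mulVec z₀ + 2 * (b ⬝ᵥ z₀) + c)
    (S : Matrix (Fin n) (Fin n) ℝ) (hS : IsUnit S)
    (α δ : Fin n → ℝ)
    (hSA : Sᵀ * A * S = Matrix.diagonal α)
    (hSD : Sᵀ * D * S = Matrix.diagonal δ) :
    (∀ z : Fin n → ℝ, 0 ≤ z ⬝ᵥ A.mulVec z + 2 * (b ⬝ᵥ z) + c →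
        0 ≤ z ⬝ᵥ D.mulVec z + 2 * (e ⬝ᵥ z) + f) ↔
      ∃ (lam : ℝ) (t : Fin n → ℝ), 0 ≤ lam ∧ (∑ i, t i) ≤ f - lam * c ∧
        ∀ i : Fin n,
          ((Sᵀ.mulVec e) i - lam * (Sᵀ.mulVec b) i, t i, δ i - lam * α i) ∈ socQ :=
  simplified_S_lemma_general A D b e c f hslater S hS α δ hSA hSD
end

section
/- Classical S-lemma: Let A, D ∈ ℝ^{n×n} be symmetric, b, e ∈ ℝⁿ, c, f ∈ ℝ, and suppose there exists z₀ ∈ ℝⁿ with z₀ᵀAz₀ + 2bᵀz₀ + c > 0. Then the implication (for all z ∈ ℝⁿ: zᵀAz + 2bᵀz + c ≥ 0 implies zᵀDz + 2eᵀz + f ≥ 0) holds if and only if there exists λ ≥ 0 such that the (n+1)×(n+1) symmetric block matrix with upper-left block D − λA, upper-right block e − λb, lower-left block (e − λb)ᵀ, and lower-right entry f − λc is positive semidefinite. -/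
open Matrix

/-!
Homogenize: with the bordered matrices `Â = [A b; bᵀ c]` and `D̂ = [D e; eᵀ f]`, the affine forms
at `z` are the quadratic forms of `Â`, `D̂` at `(z, 1)`. Scaling transfers the affine implication
to `Â(z, t) ≥ 0 → D̂(z, t) ≥ 0` for `t ≠ 0`, and perturbing along the Slater point `(z₀, 1)` and
passing to the limit gives it for `t = 0`.

The homogeneous S-lemma then holds with `λ = inf {Q₂ y / Q₁ y | Q₁ y > 0}`. The only nontrivial
case is `Q₁ x < 0 < Q₁ y`: on the line `x + s y` the form `Q₁` has a root on each side of
`s = 0` and `Q₂` is nonnegative at both. Eliminating `s²` with the root equation turns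
`Q₁ y · Q₂(x + s y)` into an affine function of `s` that is nonnegative at both roots, hence at
`s = 0`, where it equals `Q₁ y · Q₂ x - Q₂ y · Q₁ x`.
-/

lemma nonneg_of_forall_pos_quadratic {a b c : ℝ} (h : ∀ ε > 0, 0 ≤ a + b * ε + c * (ε * ε)) :
    0 ≤ a := by
  have hcont : Continuous fun ε : ℝ => a + b * ε + c * (ε * ε) := by fun_prop
  have hlim := (hcont.tendsto 0).mono_left (nhdsWithin_le_nhds (s := Set.Ioi 0))
  simpa using ge_of_tendsto hlim (eventually_nhdsWithin_of_forall h)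

lemma mul_le_mul_of_nonneg_on_roots {a m p α β γ : ℝ} (ha : a ≤ 0) (hp : 0 < p)
    (h : ∀ s, a + m * s + p * (s * s) = 0 → 0 ≤ α + β * s + γ * (s * s)) :
    γ * a ≤ α * p := by
  have hdisc : m ^ 2 ≤ discrim p m a := by unfold discrim; nlinarith
  set δ := √(discrim p m a)
  have hδ : discrim p m a = δ * δ := (Real.mul_self_sqrt ((sq_nonneg m).trans hdisc)).symm
  have hmδ : |m| ≤ δ := Real.abs_le_sqrt hdisc
  have haffine : ∀ s, p * (s * s) + m * s + a = 0 →
      0 ≤ (α * p - γ * a) + s * (β * p - γ * m) := by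
    intro s hs
    linear_combination mul_nonneg hp.le (h s (by linarith)) + γ * hs
  have h₁ := haffine _ ((quadratic_eq_zero_iff hp.ne' hδ _).2 (Or.inl rfl))
  have h₂ := haffine _ ((quadratic_eq_zero_iff hp.ne' hδ _).2 (Or.inr rfl))
  have r₁ : 0 ≤ (-m + δ) / (2 * p) := div_nonneg (by linarith [le_abs_self m]) (by positivity)
  have r₂ : (-m - δ) / (2 * p) ≤ 0 :=
    div_nonpos_of_nonpos_of_nonneg (by linarith [neg_abs_le m]) (by positivity)
  rcases le_total 0 (β * p - γ * m) with hK | hK <;> nlinarith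

namespace QuadraticMap

lemma map_add_smul {R M : Type*} [CommRing R] [AddCommGroup M] [Module R M]
    (Q : QuadraticForm R M) (x y : M) (s : R) :
    Q (x + s • y) = Q x + polar Q x y * s + Q y * (s * s) := by
  rw [QuadraticMap.map_add (⇑Q), Q.map_smul, polar_smul_right, smul_eq_mul, smul_eq_mul]
  ring

variable {V : Type*} [AddCommGroup V] [Module ℝ V] {Q₁ Q₂ : QuadraticForm ℝ V}

lemma mul_le_mul_of_nonneg_of_isotropic (H : ∀ z, Q₁ z = 0 → 0 ≤ Q₂ z) {x y : V}
    (hx : Q₁ x ≤ 0) (hy : 0 < Q₁ y) : Q₂ y * Q₁ x ≤ Q₂ x * Q₁ y :=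
  mul_le_mul_of_nonneg_on_roots hx hy fun s hs => by
    simpa only [map_add_smul] using H (x + s • y) (by rwa [map_add_smul])

theorem exists_nonneg_mul_le_of_nonneg_imp (H : ∀ x, 0 ≤ Q₁ x → 0 ≤ Q₂ x)
    (hslater : ∃ x, 0 < Q₁ x) :
    ∃ lam : ℝ, 0 ≤ lam ∧ ∀ x, lam * Q₁ x ≤ Q₂ x := by
  set U := (fun y => Q₂ y / Q₁ y) '' {y | 0 < Q₁ y}
  have hU : U.Nonempty := Set.Nonempty.image _ hslater
  have hU0 : ∀ d ∈ U, 0 ≤ d := by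
    rintro _ ⟨y, hy, rfl⟩
    exact div_nonneg (H y hy.le) hy.le
  refine ⟨sInf U, le_csInf hU hU0, fun x => ?_⟩
  rcases lt_trichotomy (Q₁ x) 0 with hx | hx | hx
  · rw [← div_le_iff_of_neg hx]
    refine le_csInf hU ?_
    rintro _ ⟨y, hy, rfl⟩
    rw [div_le_iff_of_neg hx, div_mul_eq_mul_div, div_le_iff₀ hy]
    exact mul_le_mul_of_nonneg_of_isotropic (fun z hz => H z hz.ge) hx.le hy
  · rw [hx, mul_zero]
    exact H x hx.ge
  · rw [← le_div_iff₀ hx]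
    exact csInf_le ⟨0, hU0⟩ ⟨x, hx, rfl⟩

lemma nonneg_of_nonneg_imp_add_smul {w x : V} (hw : 0 < Q₁ w) (hx : 0 ≤ Q₁ x)
    (H : ∀ s : ℝ, s ≠ 0 → 0 ≤ Q₁ (x + s • w) → 0 ≤ Q₂ (x + s • w)) : 0 ≤ Q₂ x := by
  -- the sign `σ` keeps the cross term of `Q₁ (x + (σ * ε) • w)` nonnegative for every `ε > 0`
  obtain ⟨σ, hσ, hσpolar⟩ : ∃ σ : ℝ, σ * σ = 1 ∧ 0 ≤ polar Q₁ x w * σ := by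
    rcases le_total 0 (polar Q₁ x w) with h | h
    · exact ⟨1, by norm_num, by linarith⟩
    · exact ⟨-1, by norm_num, by linarith⟩
  refine nonneg_of_forall_pos_quadratic (b := polar Q₂ x w * σ) (c := Q₂ w) fun ε hε => ?_
  have hsq : σ * ε * (σ * ε) = ε * ε := by linear_combination ε * ε * hσ
  have := H (σ * ε) (mul_ne_zero (left_ne_zero_of_mul_eq_one hσ) hε.ne') (by
    rw [map_add_smul, hsq]
    nlinarith [mul_nonneg hσpolar hε.le, mul_self_nonneg ε])
  rw [map_add_smul, hsq] at this
  linarith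

end QuadraticMap

namespace Matrix

section Bordered

variable {ι R : Type*}

def bordered (M : Matrix ι ι R) (u : ι → R) (k : R) : Matrix (ι ⊕ Unit) (ι ⊕ Unit) R :=
  fromBlocks M (replicateCol Unit u) (replicateRow Unit u) (of fun _ _ => k)

lemma IsSymm.bordered {M : Matrix ι ι R} (hM : M.IsSymm) (u : ι → R) (k : R) :
    (M.bordered u k).IsSymm :=
  hM.fromBlocks (transpose_replicateCol u) (by ext; rfl)

variable [CommRing R]

lemma bordered_sub_smul (M N : Matrix ι ι R) (u v : ι → R) (k l r : R) :
    bordered (M - r • N) (u - r • v) (k - r * l) = bordered M u k - r • bordered N v l := by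
  ext (i | i) (j | j) <;> simp [bordered]

variable [Fintype ι] [DecidableEq ι]

lemma toQuadraticForm'_apply_s5 (M : Matrix ι ι R) (x : ι → R) :
    M.toQuadraticForm' x = x ⬝ᵥ M *ᵥ x := by
  simp [toQuadraticForm', toLinearMap₂'_apply']

lemma toQuadraticForm'_bordered_sumElim_one (M : Matrix ι ι R) (u : ι → R) (k : R)
    (z : ι → R) : (bordered M u k).toQuadraticForm' (Sum.elim z fun _ => 1) =
      z ⬝ᵥ M *ᵥ z + 2 * (u ⬝ᵥ z) + k := by
  have hcol : replicateCol Unit u *ᵥ (fun _ => 1) = u := by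
    ext; simp [mulVec, dotProduct]
  have hrow : replicateRow Unit u *ᵥ z = fun _ => u ⬝ᵥ z := by
    ext; simp [mulVec, dotProduct]
  rw [toQuadraticForm'_apply_s5, bordered, fromBlocks_mulVec, Sum.elim_comp_inl, Sum.elim_comp_inr,
    sumElim_dotProduct_sumElim, hcol, hrow, dotProduct_add, dotProduct_comm z u]
  simp only [dotProduct, mulVec, Finset.univ_unique, PUnit.default_eq_unit, Pi.add_apply, of_apply,
    mul_one, Finset.sum_const, Finset.card_singleton, one_smul, one_mul]
  ring

end Bordered

lemma posSemidef_sub_smul_iff {ι : Type*} [Fintype ι] [DecidableEq ι] {M N : Matrix ι ι ℝ}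
    (hM : M.IsSymm) (hN : N.IsSymm) (r : ℝ) :
    (M - r • N).PosSemidef ↔ ∀ x, r * N.toQuadraticForm' x ≤ M.toQuadraticForm' x := by
  simp [posSemidef_iff_dotProduct_mulVec, hM.sub (hN.smul r), toQuadraticForm'_apply_s5,
    sub_mulVec, smul_mulVec, dotProduct_sub]

end Matrix

section Homogenization

variable {ι : Type*} [Fintype ι] [DecidableEq ι] {A D : Matrix ι ι ℝ} {b e : ι → ℝ} {c f : ℝ}

lemma bordered_imp_of_affine_imp_of_ne_zero
    (himp : ∀ z, 0 ≤ z ⬝ᵥ A *ᵥ z + 2 * (b ⬝ᵥ z) + c → 0 ≤ z ⬝ᵥ D *ᵥ z + 2 * (e ⬝ᵥ z) + f)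
    {x : ι ⊕ Unit → ℝ} (ht : x (Sum.inr ()) ≠ 0) (hx : 0 ≤ (A.bordered b c).toQuadraticForm' x) :
    0 ≤ (D.bordered e f).toQuadraticForm' x := by
  set t := x (Sum.inr ())
  set z := t⁻¹ • (x ∘ Sum.inl)
  have hxz : x = t • Sum.elim z fun _ => 1 := by
    funext i
    rcases i with i | ⟨⟩ <;> simp [z, t, ht]
  rw [hxz, QuadraticMap.map_smul, smul_eq_mul, toQuadraticForm'_bordered_sumElim_one] at hx ⊢
  have hz : 0 ≤ z ⬝ᵥ A *ᵥ z + 2 * (b ⬝ᵥ z) + c := nonneg_of_mul_nonneg_right hx (mul_self_pos.2 ht)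
  exact mul_nonneg (mul_self_nonneg t) (himp z hz)

lemma bordered_imp_of_affine_imp
    (himp : ∀ z, 0 ≤ z ⬝ᵥ A *ᵥ z + 2 * (b ⬝ᵥ z) + c → 0 ≤ z ⬝ᵥ D *ᵥ z + 2 * (e ⬝ᵥ z) + f)
    (hslater : ∃ z₀, 0 < z₀ ⬝ᵥ A *ᵥ z₀ + 2 * (b ⬝ᵥ z₀) + c) (x : ι ⊕ Unit → ℝ)
    (hx : 0 ≤ (A.bordered b c).toQuadraticForm' x) : 0 ≤ (D.bordered e f).toQuadraticForm' x := by
  obtain ⟨z₀, hz₀⟩ := hslater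
  by_cases ht : x (Sum.inr ()) = 0
  · refine QuadraticMap.nonneg_of_nonneg_imp_add_smul (w := Sum.elim z₀ fun _ => 1) ?_ hx
      fun s hs => bordered_imp_of_affine_imp_of_ne_zero himp (by simp [ht, hs])
    rwa [toQuadraticForm'_bordered_sumElim_one]
  · exact bordered_imp_of_affine_imp_of_ne_zero himp ht hx

end Homogenization

theorem classical_S_lemma {n : ℕ}
    (A D : Matrix (Fin n) (Fin n) ℝ) (hA : A.IsSymm) (hD : D.IsSymm)
    (b e : Fin n → ℝ) (c f : ℝ)
    (hslater : ∃ z₀ : Fin n → ℝ, 0 < z₀ ⬝ᵥ A.mulVec z₀ + 2 * (b ⬝ᵥ z₀) + c) :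
    (∀ z : Fin n → ℝ, 0 ≤ z ⬝ᵥ A.mulVec z + 2 * (b ⬝ᵥ z) + c →
        0 ≤ z ⬝ᵥ D.mulVec z + 2 * (e ⬝ᵥ z) + f) ↔
      ∃ lam : ℝ, 0 ≤ lam ∧
        (Matrix.fromBlocks (D - lam • A) (Matrix.replicateCol Unit (e - lam • b))
          (Matrix.replicateRow Unit (e - lam • b))
          (Matrix.of fun _ _ => f - lam * c)).PosSemidef := by
  have hpsd : ∀ lam : ℝ, (bordered (D - lam • A) (e - lam • b) (f - lam * c)).PosSemidef ↔
      ∀ x, lam * (A.bordered b c).toQuadraticForm' x ≤ (D.bordered e f).toQuadraticForm' x :=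
    fun lam => by
      rw [bordered_sub_smul]
      exact posSemidef_sub_smul_iff (hD.bordered e f) (hA.bordered b c) lam
  constructor
  · intro himp
    obtain ⟨z₀, hz₀⟩ := hslater
    obtain ⟨lam, hlam, hle⟩ := QuadraticMap.exists_nonneg_mul_le_of_nonneg_imp
      (bordered_imp_of_affine_imp himp ⟨z₀, hz₀⟩)
      ⟨Sum.elim z₀ fun _ => 1, by rwa [toQuadraticForm'_bordered_sumElim_one]⟩
    exact ⟨lam, hlam, (hpsd lam).2 hle⟩
  · rintro ⟨lam, hlam, hbordered⟩ z hz
    have := (hpsd lam).1 hbordered (Sum.elim z fun _ => 1)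
    rw [toQuadraticForm'_bordered_sumElim_one, toQuadraticForm'_bordered_sumElim_one] at this
    nlinarith [mul_nonneg hlam hz]
end
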